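/- Let f₀ > 0 solve −f₀'' + (t+α₀)² f₀ = (1/b)(1 − f₀²) f₀ on [0,ℓ] with f₀'(0) = f₀'(ℓ) = 0, and let ψ = f₀(t) u(s,t) e^{iΦ} with Φ(s,t) = −α₀ s − st/2 and u ∈ H¹ on the rectangle R = [0,L]×[0,ℓ]. Then the Ginzburg–Landau energy with potential F = (1/2)x^⊥ splits as G[ψ; R] = −(1/(2b))∫_R f₀⁴ + E₀[u; R], where E₀[u;R] = ∫_R f₀² {|∂_t u|² + |∂_s u|² − 2(t+α₀) j_s[u] + (1/(2b)) f₀² (1−|u|²)²} ds dt and j_s[u] = Im(ū ∂_s u). -/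

import Mathlib

/-!
With `ψ = f₀ u e^{iΦ}`, the gauge `Φ` turns the magnetic gradient of `ψ` into
`e^{iΦ} (f₀ (∂ₛu - i(t+α₀)u), f₀' u + f₀ ∂ₜu)`. Expanding the squares pointwise and eliminating
`f₀''` by the equation for `f₀` leaves the density of `E₀`, the term `-f₀⁴/(2b)`, and the exact
derivative `∂ₜ(f₀ f₀' |u|²)`, whose integral over `[0,ℓ]` vanishes since `f₀'(0) = f₀'(ℓ) = 0`.
-/

open MeasureTheory

/-- Partial derivative in the first (tangential) variable. -/
noncomputable def pdS (ψ : ℝ × ℝ → ℂ) (p : ℝ × ℝ) : ℂ :=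
  deriv (fun x => ψ (x, p.2)) p.1

/-- Partial derivative in the second (normal) variable. -/
noncomputable def pdT (ψ : ℝ × ℝ → ℂ) (p : ℝ × ℝ) : ℂ :=
  deriv (fun y => ψ (p.1, y)) p.2

/-- The Ginzburg–Landau energy on the rectangle `[0,L] × [0,ℓ]` with magnetic
potential `F(s,t) = (1/2)(-t, s)`. -/
noncomputable def GLrect (b L ℓ : ℝ) (ψ : ℝ × ℝ → ℂ) : ℝ :=
  ∫ s in (0:ℝ)..L, ∫ t in (0:ℝ)..ℓ,
    (‖pdS ψ (s, t) + Complex.I * (-(t / 2) : ℝ) * ψ (s, t)‖ ^ 2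
      + ‖pdT ψ (s, t) + Complex.I * ((s / 2 : ℝ) : ℂ) * ψ (s, t)‖ ^ 2
      - (1 / (2 * b)) * (2 * ‖ψ (s, t)‖ ^ 2 - ‖ψ (s, t)‖ ^ 4))

/-- The reduced energy `E₀[u; R]`. -/
noncomputable def E0 (b L ℓ α₀ : ℝ) (f₀ : ℝ → ℝ) (u : ℝ × ℝ → ℂ) : ℝ :=
  ∫ s in (0:ℝ)..L, ∫ t in (0:ℝ)..ℓ,
    f₀ t ^ 2 * (‖pdT u (s, t)‖ ^ 2 + ‖pdS u (s, t)‖ ^ 2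
      - 2 * (t + α₀) * ((starRingEnd ℂ) (u (s, t)) * pdS u (s, t)).im
      + (1 / (2 * b)) * f₀ t ^ 2 * (1 - ‖u (s, t)‖ ^ 2) ^ 2)

open Complex ComplexConjugate

section PartialDerivatives

variable {u : ℝ × ℝ → ℂ}

lemma hasDerivAt_pdS (hu : Differentiable ℝ u) (s t : ℝ) :
    HasDerivAt (fun x => u (x, t)) (pdS u (s, t)) s :=
  ((hu (s, t)).comp s (differentiableAt_id.prodMk (differentiableAt_const t))).hasDerivAt

lemma hasDerivAt_pdT (hu : Differentiable ℝ u) (s t : ℝ) :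
    HasDerivAt (fun y => u (s, y)) (pdT u (s, t)) t :=
  ((hu (s, t)).comp t ((differentiableAt_const s).prodMk differentiableAt_id)).hasDerivAt

lemma pdS_eq_fderiv (hu : Differentiable ℝ u) (p : ℝ × ℝ) : pdS u p = fderiv ℝ u p (1, 0) :=
  ((hu p).hasFDerivAt.comp_hasDerivAt p.1
    ((hasDerivAt_id p.1).prodMk (hasDerivAt_const p.1 p.2))).deriv

lemma pdT_eq_fderiv (hu : Differentiable ℝ u) (p : ℝ × ℝ) : pdT u p = fderiv ℝ u p (0, 1) :=
  ((hu p).hasFDerivAt.comp_hasDerivAt p.2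
    ((hasDerivAt_const p.2 p.1).prodMk (hasDerivAt_id p.2))).deriv

lemma continuous_pdS (hu : ContDiff ℝ 1 u) : Continuous (pdS u) := by
  rw [funext (pdS_eq_fderiv (hu.differentiable one_ne_zero))]
  exact (hu.continuous_fderiv one_ne_zero).clm_apply continuous_const

lemma continuous_pdT (hu : ContDiff ℝ 1 u) : Continuous (pdT u) := by
  rw [funext (pdT_eq_fderiv (hu.differentiable one_ne_zero))]
  exact (hu.continuous_fderiv one_ne_zero).clm_apply continuous_const

end PartialDerivatives

lemma sq_norm_sub_I_mul (z w : ℂ) (c : ℝ) :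
    ‖z - I * c * w‖ ^ 2 = ‖z‖ ^ 2 - 2 * c * (conj w * z).im + c ^ 2 * ‖w‖ ^ 2 := by
  simp only [Complex.sq_norm, normSq_apply, sub_re, sub_im, mul_re, mul_im, I_re, I_im, ofReal_re,
    ofReal_im, conj_re, conj_im]
  ring

lemma sq_norm_real_mul_add (z w : ℂ) (a b : ℝ) :
    ‖a * z + b * w‖ ^ 2 = a ^ 2 * ‖z‖ ^ 2 + 2 * a * b * (conj z * w).re + b ^ 2 * ‖w‖ ^ 2 := by
  simp only [Complex.sq_norm, normSq_apply, add_re, add_im, mul_re, mul_im, ofReal_re, ofReal_im,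
    conj_re, conj_im]
  ring

lemma hasDerivAt_sq_norm {v : ℝ → ℂ} {v' : ℂ} {t : ℝ} (hv : HasDerivAt v v' t) :
    HasDerivAt (fun y => ‖v y‖ ^ 2) (2 * (conj (v t) * v').re) t := by
  simpa [Complex.inner, mul_comm] using hv.norm_sq

noncomputable def gaugePhase (α₀ s t : ℝ) : ℂ :=
  exp (I * ((-α₀ * s - s * t / 2 : ℝ) : ℂ))

lemma norm_gaugePhase (α₀ s t : ℝ) : ‖gaugePhase α₀ s t‖ = 1 := by
  rw [gaugePhase, mul_comm]
  exact norm_exp_ofReal_mul_I _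

lemma hasDerivAt_gaugePhase_fst (α₀ s t : ℝ) :
    HasDerivAt (fun x => gaugePhase α₀ x t)
      (gaugePhase α₀ s t * (I * ((-α₀ - t / 2 : ℝ) : ℂ))) s := by
  have hΦ : HasDerivAt (fun x : ℝ => -α₀ * x - x * t / 2) (-α₀ - t / 2) s :=
    (((hasDerivAt_id s).const_mul (-α₀)).sub
      (((hasDerivAt_id s).mul_const t).div_const 2)).congr_deriv (by ring)
  exact (hΦ.ofReal_comp.const_mul I).cexp

lemma hasDerivAt_gaugePhase_snd (α₀ s t : ℝ) :
    HasDerivAt (fun y => gaugePhase α₀ s y) (gaugePhase α₀ s t * (I * ((-(s / 2) : ℝ) : ℂ))) t := by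
  have hΦ : HasDerivAt (fun y : ℝ => -α₀ * s - s * y / 2) (-(s / 2)) t :=
    ((hasDerivAt_const t (-α₀ * s)).sub
      (((hasDerivAt_id t).const_mul s).div_const 2)).congr_deriv (by ring)
  exact (hΦ.ofReal_comp.const_mul I).cexp

section GaugeTransform

variable {f₀ : ℝ → ℝ} {u : ℝ × ℝ → ℂ}

noncomputable def gaugeTransform (α₀ : ℝ) (f₀ : ℝ → ℝ) (u : ℝ × ℝ → ℂ) (p : ℝ × ℝ) : ℂ :=
  (f₀ p.2 : ℂ) * u p * gaugePhase α₀ p.1 p.2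

/-- The gauge `Φ` is chosen so that `F + ∇Φ = -(t + α₀) e_s`. -/
lemma covariant_pdS_gaugeTransform (α₀ : ℝ) (hu : Differentiable ℝ u) (s t : ℝ) :
    pdS (gaugeTransform α₀ f₀ u) (s, t) + I * (-(t / 2) : ℝ) * gaugeTransform α₀ f₀ u (s, t)
      = gaugePhase α₀ s t * f₀ t * (pdS u (s, t) - I * (t + α₀ : ℝ) * u (s, t)) := by
  have hψ : HasDerivAt (fun x => gaugeTransform α₀ f₀ u (x, t)) _ s :=
    ((hasDerivAt_pdS hu s t).const_mul (f₀ t : ℂ)).mul (hasDerivAt_gaugePhase_fst α₀ s t)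
  rw [show pdS _ (s, t) = _ from hψ.deriv, gaugeTransform]
  push_cast
  ring

lemma covariant_pdT_gaugeTransform (α₀ : ℝ) (hf : Differentiable ℝ f₀) (hu : Differentiable ℝ u)
    (s t : ℝ) :
    pdT (gaugeTransform α₀ f₀ u) (s, t) + I * (s / 2 : ℝ) * gaugeTransform α₀ f₀ u (s, t)
      = gaugePhase α₀ s t * (deriv f₀ t * u (s, t) + f₀ t * pdT u (s, t)) := by
  have hψ : HasDerivAt (fun y => gaugeTransform α₀ f₀ u (s, y)) _ t :=
    (((hf t).hasDerivAt.ofReal_comp).mul (hasDerivAt_pdT hu s t)).mul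
      (hasDerivAt_gaugePhase_snd α₀ s t)
  rw [show pdT _ (s, t) = _ from hψ.deriv, gaugeTransform, Pi.mul_apply]
  push_cast
  ring

end GaugeTransform

lemma density_split_of_ode {b lam a a' a'' : ℝ}
    (hode : -a'' + lam ^ 2 * a = (1 / b) * (1 - a ^ 2) * a) (U Us Ut : ℂ) :
    ‖(a : ℂ) * (Us - I * lam * U)‖ ^ 2 + ‖(a' : ℂ) * U + a * Ut‖ ^ 2
        - (1 / (2 * b)) * (2 * ‖(a : ℂ) * U‖ ^ 2 - ‖(a : ℂ) * U‖ ^ 4)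
      = a ^ 2 * (‖Ut‖ ^ 2 + ‖Us‖ ^ 2 - 2 * lam * (conj U * Us).im
          + (1 / (2 * b)) * a ^ 2 * (1 - ‖U‖ ^ 2) ^ 2)
        - (1 / (2 * b)) * a ^ 4
        + ((a' ^ 2 + a * a'') * ‖U‖ ^ 2 + a * a' * (2 * (conj U * Ut).re)) := by
  rw [sq_norm_real_mul_add]
  simp only [norm_mul, mul_pow, sq_norm_sub_I_mul, norm_real, Real.norm_eq_abs, sq_abs,
    Even.pow_abs ⟨2, rfl⟩]
  linear_combination (a * ‖U‖ ^ 2) * hode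

section Densities

variable {b α₀ : ℝ} {f₀ : ℝ → ℝ} {u : ℝ × ℝ → ℂ}

noncomputable def glDensity (b : ℝ) (ψ : ℝ × ℝ → ℂ) (p : ℝ × ℝ) : ℝ :=
  ‖pdS ψ p + I * (-(p.2 / 2) : ℝ) * ψ p‖ ^ 2 + ‖pdT ψ p + I * ((p.1 / 2 : ℝ) : ℂ) * ψ p‖ ^ 2
    - (1 / (2 * b)) * (2 * ‖ψ p‖ ^ 2 - ‖ψ p‖ ^ 4)

noncomputable def e0Density (b α₀ : ℝ) (f₀ : ℝ → ℝ) (u : ℝ × ℝ → ℂ) (p : ℝ × ℝ) : ℝ :=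
  f₀ p.2 ^ 2 * (‖pdT u p‖ ^ 2 + ‖pdS u p‖ ^ 2 - 2 * (p.2 + α₀) * (conj (u p) * pdS u p).im
    + (1 / (2 * b)) * f₀ p.2 ^ 2 * (1 - ‖u p‖ ^ 2) ^ 2)

/-- `∂ₜ (f₀ f₀' |u|²)`, the part of the density that integrates away by the Neumann conditions. -/
noncomputable def crossTerm (f₀ : ℝ → ℝ) (u : ℝ × ℝ → ℂ) (p : ℝ × ℝ) : ℝ :=
  (deriv f₀ p.2 ^ 2 + f₀ p.2 * deriv (deriv f₀) p.2) * ‖u p‖ ^ 2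
    + f₀ p.2 * deriv f₀ p.2 * (2 * (conj (u p) * pdT u p).re)

lemma continuous_e0Density (hf : Continuous f₀) (hu : ContDiff ℝ 1 u) :
    Continuous (e0Density b α₀ f₀ u) := by
  have := hu.continuous
  have := continuous_pdS hu
  have := continuous_pdT hu
  unfold e0Density
  fun_prop

lemma continuous_crossTerm (hf : ContDiff ℝ 2 f₀) (hu : ContDiff ℝ 1 u) :
    Continuous (crossTerm f₀ u) := by
  have hf' : ContDiff ℝ 1 (deriv f₀) := hf.iterate_deriv' 1 1
  have := hf.continuous
  have := hf'.continuous
  have := hf'.continuous_deriv le_rfl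
  have := hu.continuous
  have := continuous_pdT hu
  unfold crossTerm
  fun_prop

lemma hasDerivAt_crossTerm (hf : Differentiable ℝ f₀) (hf' : Differentiable ℝ (deriv f₀))
    (hu : Differentiable ℝ u) (s t : ℝ) :
    HasDerivAt (fun y => f₀ y * deriv f₀ y * ‖u (s, y)‖ ^ 2) (crossTerm f₀ u (s, t)) t :=
  (((hf t).hasDerivAt.mul (hf' t).hasDerivAt).mul
    (hasDerivAt_sq_norm (hasDerivAt_pdT hu s t))).congr_deriv (by rw [crossTerm, Pi.mul_apply]; ring)

lemma integral_crossTerm_eq_zero {ℓ : ℝ} (hf : ContDiff ℝ 2 f₀) (hneu0 : deriv f₀ 0 = 0)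
    (hneuℓ : deriv f₀ ℓ = 0) (hu : ContDiff ℝ 1 u) (s : ℝ) :
    ∫ t in (0:ℝ)..ℓ, crossTerm f₀ u (s, t) = 0 := by
  have hf' : ContDiff ℝ 1 (deriv f₀) := hf.iterate_deriv' 1 1
  rw [intervalIntegral.integral_eq_sub_of_hasDerivAt
    (fun t _ => hasDerivAt_crossTerm (hf.differentiable two_ne_zero)
      (hf'.differentiable one_ne_zero) (hu.differentiable one_ne_zero) s t)
    (((continuous_crossTerm hf hu).comp (Continuous.prodMk_right s)).intervalIntegrable _ _)]
  simp [hneu0, hneuℓ]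

end Densities

section Splitting

variable {b α₀ ℓ : ℝ} {f₀ : ℝ → ℝ} {u : ℝ × ℝ → ℂ}

lemma glDensity_gaugeTransform (hf : Differentiable ℝ f₀) (hu : Differentiable ℝ u) (s t : ℝ)
    (hode : -(deriv (deriv f₀) t) + (t + α₀) ^ 2 * f₀ t = (1 / b) * (1 - f₀ t ^ 2) * f₀ t) :
    glDensity b (gaugeTransform α₀ f₀ u) (s, t)
      = e0Density b α₀ f₀ u (s, t) - (1 / (2 * b)) * f₀ t ^ 4 + crossTerm f₀ u (s, t) := by
  have hS : ‖pdS (gaugeTransform α₀ f₀ u) (s, t)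
      + I * (-(t / 2) : ℝ) * gaugeTransform α₀ f₀ u (s, t)‖
      = ‖(f₀ t : ℂ) * (pdS u (s, t) - I * (t + α₀ : ℝ) * u (s, t))‖ := by
    rw [covariant_pdS_gaugeTransform α₀ hu, mul_assoc, norm_mul, norm_gaugePhase, one_mul]
  have hT : ‖pdT (gaugeTransform α₀ f₀ u) (s, t)
      + I * (s / 2 : ℝ) * gaugeTransform α₀ f₀ u (s, t)‖
      = ‖((deriv f₀ t : ℝ) : ℂ) * u (s, t) + f₀ t * pdT u (s, t)‖ := by
    rw [covariant_pdT_gaugeTransform α₀ hf hu, norm_mul, norm_gaugePhase, one_mul]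
  have hψ : ‖gaugeTransform α₀ f₀ u (s, t)‖ = ‖(f₀ t : ℂ) * u (s, t)‖ := by
    rw [gaugeTransform, norm_mul _ (gaugePhase _ _ _), norm_gaugePhase, mul_one]
  rw [glDensity, hS, hT, hψ, density_split_of_ode hode, e0Density, crossTerm]

lemma integral_glDensity_gaugeTransform (hℓ : 0 ≤ ℓ) (hf : ContDiff ℝ 2 f₀)
    (hode : ∀ t ∈ Set.Icc (0:ℝ) ℓ,
      -(deriv (deriv f₀) t) + (t + α₀) ^ 2 * f₀ t = (1 / b) * (1 - f₀ t ^ 2) * f₀ t)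
    (hneu0 : deriv f₀ 0 = 0) (hneuℓ : deriv f₀ ℓ = 0) (hu : ContDiff ℝ 1 u) (s : ℝ) :
    ∫ t in (0:ℝ)..ℓ, glDensity b (gaugeTransform α₀ f₀ u) (s, t)
      = (∫ t in (0:ℝ)..ℓ, e0Density b α₀ f₀ u (s, t))
        - (1 / (2 * b)) * ∫ t in (0:ℝ)..ℓ, f₀ t ^ 4 := by
  have hE : IntervalIntegrable (fun t => e0Density b α₀ f₀ u (s, t)) volume 0 ℓ :=
    ((continuous_e0Density hf.continuous hu).comp (Continuous.prodMk_right s)).intervalIntegrable _ _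
  have hF : IntervalIntegrable (fun t => (1 / (2 * b)) * f₀ t ^ 4) volume 0 ℓ :=
    (continuous_const.mul (hf.continuous.pow 4)).intervalIntegrable _ _
  have hC : IntervalIntegrable (fun t => crossTerm f₀ u (s, t)) volume 0 ℓ :=
    ((continuous_crossTerm hf hu).comp (Continuous.prodMk_right s)).intervalIntegrable _ _
  rw [intervalIntegral.integral_congr fun t ht => glDensity_gaugeTransform
      (hf.differentiable two_ne_zero) (hu.differentiable one_ne_zero) s t
      (hode t (Set.uIcc_of_le hℓ ▸ ht)),
    intervalIntegral.integral_add (hE.sub hF) hC, integral_crossTerm_eq_zero hf hneu0 hneuℓ hu,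
    add_zero, intervalIntegral.integral_sub hE hF, intervalIntegral.integral_const_mul]

end Splitting

theorem energy_splitting_general (b L ℓ α₀ : ℝ) (hℓ : 0 < ℓ)
    (f₀ : ℝ → ℝ) (hreg : ContDiff ℝ 2 f₀)
    (hode : ∀ t ∈ Set.Icc (0:ℝ) ℓ,
      -(deriv (deriv f₀) t) + (t + α₀) ^ 2 * f₀ t = (1 / b) * (1 - f₀ t ^ 2) * f₀ t)
    (hneu0 : deriv f₀ 0 = 0) (hneuℓ : deriv f₀ ℓ = 0)
    (u : ℝ × ℝ → ℂ) (hu : ContDiff ℝ 1 u) :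
    GLrect b L ℓ (fun p => (f₀ p.2 : ℂ) * u p *
        Complex.exp (Complex.I * ((-α₀ * p.1 - p.1 * p.2 / 2 : ℝ) : ℂ)))
      = -(1 / (2 * b)) * (∫ s in (0:ℝ)..L, ∫ t in (0:ℝ)..ℓ, f₀ t ^ 4)
        + E0 b L ℓ α₀ f₀ u := by
  have hE : Continuous fun s => ∫ t in (0:ℝ)..ℓ, e0Density b α₀ f₀ u (s, t) :=
    intervalIntegral.continuous_parametric_intervalIntegral_of_continuous'
      (f := fun s t => e0Density b α₀ f₀ u (s, t)) (continuous_e0Density hreg.continuous hu) 0 ℓ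
  change ∫ s in (0:ℝ)..L, ∫ t in (0:ℝ)..ℓ, glDensity b (gaugeTransform α₀ f₀ u) (s, t)
    = _ + ∫ s in (0:ℝ)..L, ∫ t in (0:ℝ)..ℓ, e0Density b α₀ f₀ u (s, t)
  rw [intervalIntegral.integral_congr fun s _ =>
      integral_glDensity_gaugeTransform hℓ.le hreg hode hneu0 hneuℓ hu s,
    intervalIntegral.integral_sub (hE.intervalIntegrable 0 L) intervalIntegrable_const,
    intervalIntegral.integral_const, intervalIntegral.integral_const, smul_eq_mul, smul_eq_mul]
  ring

/-- Energy splitting: for `ψ = f₀(t) u(s,t) e^{iΦ}` with `Φ(s,t) = -α₀ s - st/2`,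
where `f₀ > 0` solves the variational equation with Neumann boundary conditions,
the GL energy on the rectangle splits as
`G[ψ; R] = -(1/(2b)) ∫_R f₀⁴ + E₀[u; R]`. -/
theorem energy_splitting (b L ℓ α₀ : ℝ) (hb : 1 < b) (hL : 0 < L) (hℓ : 0 < ℓ)
    (f₀ : ℝ → ℝ) (hreg : ContDiff ℝ 2 f₀)
    (hpos : ∀ t ∈ Set.Icc (0:ℝ) ℓ, 0 < f₀ t)
    (hode : ∀ t ∈ Set.Icc (0:ℝ) ℓ,
      -(deriv (deriv f₀) t) + (t + α₀) ^ 2 * f₀ t = (1 / b) * (1 - f₀ t ^ 2) * f₀ t)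
    (hneu0 : deriv f₀ 0 = 0) (hneuℓ : deriv f₀ ℓ = 0)
    (u : ℝ × ℝ → ℂ) (hu : ContDiff ℝ 1 u) :
    GLrect b L ℓ (fun p => (f₀ p.2 : ℂ) * u p *
        Complex.exp (Complex.I * ((-α₀ * p.1 - p.1 * p.2 / 2 : ℝ) : ℂ)))
      = -(1 / (2 * b)) * (∫ s in (0:ℝ)..L, ∫ t in (0:ℝ)..ℓ, f₀ t ^ 4)
        + E0 b L ℓ α₀ f₀ u :=
  energy_splitting_general b L ℓ α₀ hℓ f₀ hreg hode hneu0 hneuℓ u hu
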